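/- For every Δ ≥ 3, the problem Π^orcx cannot be solved by any zero-round deterministic output rule that assigns one node configuration from its node constraint uniformly to all nodes according to edge colors: there is no node configuration {L_1,...,L_Δ} ∈ N_{Π^orcx} such that all Δ of the 2-multisets {L_i, L_i} (for 1 ≤ i ≤ Δ) belong to E_{Π^orcx}. -/

import Mathlib

set_option autoImplicit false

/-- A node-edge-checkable problem with (node) degree `Δ`: a set of node
configurations (cardinality-`Δ` multisets of labels) and a set of edge
configurations (cardinality-`2` multisets of labels). -/
structure NEProblem (Δ : ℕ) (Λ : Type) where
  nodeC : Set (Multiset Λ)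
  edgeC : Set (Multiset Λ)
  node_card : ∀ m ∈ nodeC, Multiset.card m = Δ
  edge_card : ∀ m ∈ edgeC, Multiset.card m = 2

/-- Nonempty subsets of `Λ`: the labels of `R*(P)`, `R(P)`, `R̄(P)`. -/
abbrev SubS (Λ : Type) : Type := {S : Set Λ // S.Nonempty}

variable {Δ : ℕ} {Λ Λ' Λ'' ΛP ΛI ΛF : Type}

/-- `f` is a port-local relaxation function from `P` to `P'`. -/
def IsPortLocalRelax (P : NEProblem Δ Λ) (P' : NEProblem Δ Λ') (f : Λ → Λ') : Prop :=
  (∀ m ∈ P.nodeC, m.map f ∈ P'.nodeC) ∧ (∀ m ∈ P.edgeC, m.map f ∈ P'.edgeC)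

/-- An occurrence-based relaxation witness from `P` to `P'`: for each node
configuration `C` of `P`, `p C` is a multiset of pairs matching each occurrence
of a label in `C` with its image label, such that node configurations are mapped
into node configurations of `P'`, and any two occurrences forming an edge
configuration of `P` are mapped to an edge configuration of `P'`. -/
def IsRelaxWitness (P : NEProblem Δ Λ) (P' : NEProblem Δ Λ')
    (p : Multiset Λ → Multiset (Λ × Λ')) : Prop :=
  (∀ C ∈ P.nodeC, (p C).map Prod.fst = C) ∧
  (∀ C ∈ P.nodeC, (p C).map Prod.snd ∈ P'.nodeC) ∧
  (∀ C ∈ P.nodeC, ∀ C' ∈ P.nodeC, ∀ q ∈ p C, ∀ q' ∈ p C',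
    ({q.1, q'.1} : Multiset Λ) ∈ P.edgeC → ({q.2, q'.2} : Multiset Λ') ∈ P'.edgeC)

/-- `P →0 P'` : `P'` is a relaxation of `P` (occurrence-based sense). -/
def Relaxes (P : NEProblem Δ Λ) (P' : NEProblem Δ Λ') : Prop :=
  ∃ p, IsRelaxWitness P P' p

/-- An edge-based relaxation witness from `P` to `P'` (dual of `IsRelaxWitness`). -/
def IsEdgeRelaxWitness (P : NEProblem Δ Λ) (P' : NEProblem Δ Λ')
    (p : Multiset Λ → Multiset (Λ × Λ')) : Prop :=
  (∀ C ∈ P.edgeC, (p C).map Prod.fst = C) ∧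
  (∀ C ∈ P.edgeC, (p C).map Prod.snd ∈ P'.edgeC) ∧
  (∀ s : Multiset (Λ × Λ'), (∀ q ∈ s, ∃ C ∈ P.edgeC, q ∈ p C) →
    s.map Prod.fst ∈ P.nodeC → s.map Prod.snd ∈ P'.nodeC)

/-- `P'` is an edge-based relaxation of `P`. -/
def EdgeRelaxes (P : NEProblem Δ Λ) (P' : NEProblem Δ Λ') : Prop :=
  ∃ p, IsEdgeRelaxWitness P P' p

/-- The problem `R*(P)`: labels are nonempty subsets of the labels of `P`;
a node configuration is any `Δ`-multiset of sets admitting a selection forming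
a node configuration of `P`; an edge configuration is any pair of sets all of
whose selections form edge configurations of `P`. -/
def RStar (P : NEProblem Δ Λ) : NEProblem Δ (SubS Λ) where
  nodeC := {m | Multiset.card m = Δ ∧ ∃ p : Multiset (SubS Λ × Λ),
    p.map Prod.fst = m ∧ (∀ q ∈ p, q.2 ∈ q.1.val) ∧ p.map Prod.snd ∈ P.nodeC}
  edgeC := {m | ∃ S₁ S₂ : SubS Λ, m = {S₁, S₂} ∧
    ∀ L₁ ∈ S₁.val, ∀ L₂ ∈ S₂.val, ({L₁, L₂} : Multiset Λ) ∈ P.edgeC}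
  node_card := fun _ hm => hm.1
  edge_card := by rintro m ⟨S₁, S₂, rfl, -⟩; rfl

/-- The product `P × P'` of two node-edge-checkable problems. -/
def prodP (P : NEProblem Δ Λ) (P' : NEProblem Δ Λ') : NEProblem Δ (Λ × Λ') where
  nodeC := {m | m.map Prod.fst ∈ P.nodeC ∧ m.map Prod.snd ∈ P'.nodeC}
  edgeC := {m | m.map Prod.fst ∈ P.edgeC ∧ m.map Prod.snd ∈ P'.edgeC}
  node_card := fun m hm => by have := P.node_card _ hm.1; simpa using this
  edge_card := fun m hm => by have := P.edge_card _ hm.1; simpa using this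

/-- The tripotent input `τ_P(Pi)`: labels are functions from the labels of `Pi`
to the labels of `R*(P)`; a multiset of functions is a node (resp. edge)
configuration iff applying it (in any matching) to every node (resp. edge)
configuration of `Pi` yields a node (resp. edge) configuration of `R*(P)`. -/
def tau (P : NEProblem Δ ΛP) (Pi : NEProblem Δ Λ) : NEProblem Δ (Λ → SubS ΛP) where
  nodeC := {m | Multiset.card m = Δ ∧ ∀ C ∈ Pi.nodeC,
    ∀ p : Multiset ((Λ → SubS ΛP) × Λ), p.map Prod.fst = m → p.map Prod.snd = C →
      p.map (fun q => q.1 q.2) ∈ (RStar P).nodeC}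
  edgeC := {m | Multiset.card m = 2 ∧ ∀ C ∈ Pi.edgeC,
    ∀ p : Multiset ((Λ → SubS ΛP) × Λ), p.map Prod.fst = m → p.map Prod.snd = C →
      p.map (fun q => q.1 q.2) ∈ (RStar P).edgeC}
  node_card := fun _ hm => hm.1
  edge_card := fun _ hm => hm.1

/-- A pair `{S₁, S₂}` of nonempty sets of labels satisfies the universal
quantifier w.r.t. the edge constraint of `P`. -/
def univEdge (P : NEProblem Δ Λ) (m : Multiset (SubS Λ)) : Prop :=
  ∃ S₁ S₂ : SubS Λ, m = {S₁, S₂} ∧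
    ∀ L₁ ∈ S₁.val, ∀ L₂ ∈ S₂.val, ({L₁, L₂} : Multiset Λ) ∈ P.edgeC

/-- A `Δ`-multiset of nonempty sets of labels satisfies the universal quantifier
w.r.t. the node constraint of `P`. -/
def univNode (P : NEProblem Δ Λ) (m : Multiset (SubS Λ)) : Prop :=
  Multiset.card m = Δ ∧ ∀ p : Multiset (SubS Λ × Λ),
    p.map Prod.fst = m → (∀ q ∈ p, q.2 ∈ q.1.val) → p.map Prod.snd ∈ P.nodeC

/-- `m'` strictly dominates `m` (coordinatewise inclusion up to permutation,
strict in at least one coordinate). -/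
def strictlyDominates (m' m : Multiset (SubS Λ)) : Prop :=
  ∃ p : Multiset (SubS Λ × SubS Λ), p.map Prod.fst = m' ∧ p.map Prod.snd = m ∧
    (∀ q ∈ p, q.2.val ⊆ q.1.val) ∧ ∃ q ∈ p, q.2.val ⊂ q.1.val

/-- The edge constraint of `R(P)`: maximal universally-satisfying pairs. -/
def REedge (P : NEProblem Δ Λ) : Set (Multiset (SubS Λ)) :=
  {m | univEdge P m ∧ ∀ m', univEdge P m' → ¬ strictlyDominates m' m}

/-- The problem `R(P)`. -/
def RE (P : NEProblem Δ Λ) : NEProblem Δ (SubS Λ) where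
  nodeC := {m | Multiset.card m = Δ ∧ (∀ S ∈ m, ∃ e ∈ REedge P, S ∈ e) ∧
    ∃ p : Multiset (SubS Λ × Λ), p.map Prod.fst = m ∧ (∀ q ∈ p, q.2 ∈ q.1.val) ∧
      p.map Prod.snd ∈ P.nodeC}
  edgeC := REedge P
  node_card := fun _ hm => hm.1
  edge_card := by rintro m ⟨⟨S₁, S₂, rfl, -⟩, -⟩; rfl

/-- The node constraint of `R̄(P)`: maximal universally-satisfying `Δ`-multisets. -/
def REbarNode (P : NEProblem Δ Λ) : Set (Multiset (SubS Λ)) :=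
  {m | univNode P m ∧ ∀ m', univNode P m' → ¬ strictlyDominates m' m}

/-- The problem `R̄(P)` (dual of `R(P)`). -/
def REbar (P : NEProblem Δ Λ) : NEProblem Δ (SubS Λ) where
  nodeC := REbarNode P
  edgeC := {m | ∃ S₁ S₂ : SubS Λ, m = {S₁, S₂} ∧
    (∃ e ∈ REbarNode P, S₁ ∈ e) ∧ (∃ e ∈ REbarNode P, S₂ ∈ e) ∧
    ∃ L₁ ∈ S₁.val, ∃ L₂ ∈ S₂.val, ({L₁, L₂} : Multiset Λ) ∈ P.edgeC}
  node_card := fun _ hm => hm.1.1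
  edge_card := by rintro m ⟨S₁, S₂, rfl, -⟩; rfl

/-- One step of round elimination: `Q = R̄ ∘ R`. -/
def Qop (P : NEProblem Δ Λ) : NEProblem Δ (SubS (SubS Λ)) := REbar (RE P)

/-- Label type of `Q^i(P)`. -/
def QIterType (Λ : Type) : ℕ → Type
  | 0 => Λ
  | i + 1 => SubS (SubS (QIterType Λ i))

/-- `Q^i(P)`. -/
def QIter (P : NEProblem Δ Λ) : (i : ℕ) → NEProblem Δ (QIterType Λ i)
  | 0 => P
  | i + 1 => Qop (QIter P i)

/-- Labels of `P` occurring in some configuration of `P`. -/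
def usedLabels (P : NEProblem Δ Λ) : Set Λ :=
  {L | (∃ C ∈ P.nodeC, L ∈ C) ∨ (∃ C ∈ P.edgeC, L ∈ C)}

/-- `P'` arises from `P` by a bijective renaming of (used) labels. -/
def EquivUpToRenaming (P : NEProblem Δ Λ) (P' : NEProblem Δ Λ') : Prop :=
  ∃ f : Λ → Λ', Set.InjOn f (usedLabels P) ∧
    P'.nodeC = (fun m => m.map f) '' P.nodeC ∧
    P'.edgeC = (fun m => m.map f) '' P.edgeC

/-- The trivial one-label problem. -/
def trivProblem (Δ : ℕ) : NEProblem Δ Unit where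
  nodeC := {Multiset.replicate Δ ()}
  edgeC := {Multiset.replicate 2 ()}
  node_card := by intro m hm; rw [Set.mem_singleton_iff] at hm; subst hm; simp
  edge_card := by intro m hm; rw [Set.mem_singleton_iff] at hm; subst hm; simp

/-- The labels of the ORCX problem: `Σ₁ = {O, R, C, X}`, `Σ₂ = {o, r, c, x}`. -/
inductive OLabel : Type
  | O | R | C | X
  | o | r | c | x
deriving DecidableEq

/-- Membership in `Σ₁ = {O, R, C, X}`. -/
def isCap : OLabel → Bool
  | .O | .R | .C | .X => true
  | _ => false

/-- The allowed (ordered) edge pairs of the ORCX problem, as given by the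
condensed configurations `[O]~[O R C X]`, `[O R]~[O R]`, `[O C]~[O C]`,
`[o]~[o r c x]`, `[o r]~[o c]`. -/
def orcxAllowed (y z : OLabel) : Prop :=
  (y = OLabel.O ∧ (z = OLabel.O ∨ z = OLabel.R ∨ z = OLabel.C ∨ z = OLabel.X)) ∨
  ((y = OLabel.O ∨ y = OLabel.R) ∧ (z = OLabel.O ∨ z = OLabel.R)) ∨
  ((y = OLabel.O ∨ y = OLabel.C) ∧ (z = OLabel.O ∨ z = OLabel.C)) ∨
  (y = OLabel.o ∧ (z = OLabel.o ∨ z = OLabel.r ∨ z = OLabel.c ∨ z = OLabel.x)) ∨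
  ((y = OLabel.o ∨ y = OLabel.r) ∧ (z = OLabel.o ∨ z = OLabel.c))

/-- The ORCX problem on `Δ`-regular graphs: node configurations are the
`Δ`-multisets with exactly one label in `Σ₁` and with two positions `a`, `b`
(all remaining labels in `{O, o}`) such that either `a ∈ {X, x}` and
`b ∈ {O, o}`, or `a ∈ {R, r}` and `b ∈ {C, c}`; edge configurations are the
pairs from the condensed configurations above. -/
def orcx (Δ : ℕ) : NEProblem Δ OLabel where
  nodeC := {m | Multiset.card m = Δ ∧
    Multiset.countP (fun L => isCap L = true) m = 1 ∧
    ∃ (a b : OLabel) (rest : Multiset OLabel), m = a ::ₘ b ::ₘ rest ∧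
      (∀ L ∈ rest, L = OLabel.O ∨ L = OLabel.o) ∧
      (((a = OLabel.X ∨ a = OLabel.x) ∧ (b = OLabel.O ∨ b = OLabel.o)) ∨
       ((a = OLabel.R ∨ a = OLabel.r) ∧ (b = OLabel.C ∨ b = OLabel.c)))}
  edgeC := {m | ∃ y z : OLabel, m = {y, z} ∧ orcxAllowed y z}
  node_card := fun _ h => h.1
  edge_card := by rintro m ⟨y, z, rfl, -⟩; rfl

/-! Only `O`, `R`, `C` and `o` are compatible with themselves across an edge. A node
configuration has a distinguished label `a ∈ {X, x, R, r}`, so a uniform output forces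
`a = R` and then its partner `b = C`: two labels of `Σ₁` at one node. -/

theorem orcxAllowed_self_iff (L : OLabel) :
    orcxAllowed L L ↔ L = .O ∨ L = .R ∨ L = .C ∨ L = .o := by
  cases L <;> simp [orcxAllowed]

theorem pair_self_mem_orcx_edgeC_iff {Δ : ℕ} (L : OLabel) :
    ({L, L} : Multiset OLabel) ∈ (orcx Δ).edgeC ↔ orcxAllowed L L := by
  constructor
  · rintro ⟨y, z, hpair, hyz⟩
    have hy : y ∈ ({L, L} : Multiset OLabel) := hpair ▸ by simp
    have hz : z ∈ ({L, L} : Multiset OLabel) := hpair ▸ by simp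
    simp only [Multiset.insert_eq_cons, Multiset.mem_cons, Multiset.mem_singleton, or_self] at hy hz
    rwa [hy, hz] at hyz
  · exact fun h => ⟨L, L, rfl, h⟩

theorem orcx_nontrivial_general (Δ : ℕ) :
    ¬ ∃ m ∈ (orcx Δ).nodeC,
        ∀ L ∈ m, ({L, L} : Multiset OLabel) ∈ (orcx Δ).edgeC := by
  rintro ⟨_, ⟨-, hcap, a, b, rest, rfl, -, hab⟩, hloop⟩
  have ha := (pair_self_mem_orcx_edgeC_iff a).1 (hloop a (by simp))
  have hb := (pair_self_mem_orcx_edgeC_iff b).1 (hloop b (by simp))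
  rw [orcxAllowed_self_iff] at ha hb
  rcases hab with ⟨rfl | rfl, -⟩ | ⟨rfl | rfl, rfl | rfl⟩ <;>
    simp only [reduceCtorEq, or_self, or_false, false_or] at ha hb
  rw [Multiset.countP_cons, Multiset.countP_cons] at hcap
  simp [isCap] at hcap

/-- for every `Δ ≥ 3`, there is no node configuration
`{L_1, …, L_Δ}` of `Π^orcx` such that every 2-multiset `{L_i, L_i}` is an edge
configuration of `Π^orcx`; hence no uniform zero-round output rule along edge
colors solves `Π^orcx`. -/
theorem orcx_nontrivial (Δ : ℕ) (hΔ : 3 ≤ Δ) :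
    ¬ ∃ m ∈ (orcx Δ).nodeC,
        ∀ L ∈ m, ({L, L} : Multiset OLabel) ∈ (orcx Δ).edgeC :=
  orcx_nontrivial_general Δ
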